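/- arXiv:1510.03844 — 5 statements merged into one kernel-verified Lean document; each statement's English description precedes it below -/
import Mathlib

section
/- Let n ≥ 1 and let A, B be convex bodies in ℝⁿ. Suppose that for every fractional linear map F that is admissible for A and B (i.e., A ∪ B is contained in the open half-space {x : ⟨x,c⟩ + d > 0} on which F is defined), the Lebesgue volume of F(A) is at most the Lebesgue volume of F(B). Then A ⊆ B. -/
/-!
Suppose `a ∈ A \ B`. Separate `a` from `B` by a functional, `⟪x, v⟫ < s` on `B` and `s < ⟪a, v⟫`,
and let `a₀` maximize `⟪·, v⟫` on `A`. For `t > 0` the fractional linear map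
`F_t x = (x - a₀) / (t + ⟪a₀ - x, v⟫)`, which sends the hyperplane `⟪x, v⟫ = ⟪a₀, v⟫ + t`, just
beyond the supporting hyperplane of `A` at `a₀`, to infinity, has Jacobian determinant
`t / (t + ⟪a₀ - x, v⟫) ^ (n + 1)`. The denominator is at least `⟪a₀, v⟫ - s` on `B`, so
`vol (F_t B) = O(t)`. On the homothetic copy `a₀ + t • (A - a₀) ⊆ A`, of volume `tⁿ vol A`, the
denominator is `O(t)`, so `vol (F_t A)` stays bounded away from `0` as `t → 0`.
-/

open MeasureTheory Filter Topology
open scoped InnerProductSpace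
open Module Set

theorem LinearMap.det_id_add_smulRight {𝕜 E : Type*} [Field 𝕜] [AddCommGroup E] [Module 𝕜 E]
    [FiniteDimensional 𝕜 E] (f : E →ₗ[𝕜] 𝕜) (w : E) :
    LinearMap.det (LinearMap.id + f.smulRight w) = 1 + f w := by
  set b := Module.finBasis 𝕜 E
  have hmat : LinearMap.toMatrix b b (LinearMap.id + f.smulRight w)
      = 1 + Matrix.replicateCol Unit (b.repr w) * Matrix.replicateRow Unit (fun j => f (b j)) := by
    ext i j
    simp [LinearMap.toMatrix_apply, Matrix.one_apply, Matrix.mul_apply, Finsupp.single_apply,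
      eq_comm, mul_comm]
  rw [← LinearMap.det_toMatrix b, hmat, Matrix.det_one_add_replicateCol_mul_replicateRow]
  conv_rhs => rw [← b.sum_repr w]
  simp only [dotProduct, map_sum, map_smul, smul_eq_mul, mul_comm]

theorem Convex.image_homothety_subset {E : Type*} [AddCommGroup E] [Module ℝ E] {A : Set E}
    (hA : Convex ℝ A) {a₀ : E} (ha₀ : a₀ ∈ A) {t : ℝ} (ht₀ : 0 ≤ t) (ht₁ : t ≤ 1) :
    AffineMap.homothety a₀ t '' A ⊆ A := by
  rintro _ ⟨x, hx, rfl⟩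
  rw [AffineMap.homothety_eq_lineMap]
  exact hA.lineMap_mem ha₀ hx ⟨ht₀, ht₁⟩

section FracLinear

variable {E : Type*} [NormedAddCommGroup E] [InnerProductSpace ℝ E]

noncomputable def fracLinear (b c : E) (d : ℝ) (x : E) : E := (⟪x, c⟫_ℝ + d)⁻¹ • (x + b)

theorem hasFDerivAt_fracLinear (b c : E) (d : ℝ) {x : E} (hx : ⟪x, c⟫_ℝ + d ≠ 0) :
    HasFDerivAt (fracLinear b c d)
      ((⟪x, c⟫_ℝ + d)⁻¹ • (ContinuousLinearMap.id ℝ E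
        - ((⟪x, c⟫_ℝ + d)⁻¹ • innerSL ℝ c).smulRight (x + b))) x := by
  have hden : HasFDerivAt (fun y : E => ⟪y, c⟫_ℝ + d) (innerSL ℝ c) x := by
    have := ((innerSL ℝ c).hasFDerivAt (x := x)).add_const d
    simp only [innerSL_apply_apply, real_inner_comm _ c] at this
    exact this
  refine (((hasDerivAt_inv hx).comp_hasFDerivAt x hden).smul
    ((hasFDerivAt_id x).add_const b)).congr_fderiv ?_
  ext y
  simp only [add_apply, smul_apply, sub_apply, ContinuousLinearMap.coe_id', id_eq,
    Function.comp_apply, ContinuousLinearMap.smulRight_apply, innerSL_apply_apply, smul_eq_mul,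
    real_inner_comm c]
  match_scalars <;> field_simp

theorem injOn_fracLinear {b c : E} {d : ℝ} (hD : d - ⟪b, c⟫_ℝ ≠ 0) :
    InjOn (fracLinear b c d) {x | ⟪x, c⟫_ℝ + d ≠ 0} := by
  intro x hx y hy hxy
  set z := fracLinear b c d x
  have key : ∀ w, ⟪w, c⟫_ℝ + d ≠ 0 → fracLinear b c d w = z →
      w + b = (⟪w, c⟫_ℝ + d) • z ∧ (⟪w, c⟫_ℝ + d) * (1 - ⟪z, c⟫_ℝ) = d - ⟪b, c⟫_ℝ := by
    intro w hw hwz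
    have hwb : w + b = (⟪w, c⟫_ℝ + d) • z := by
      rw [← hwz, fracLinear, smul_inv_smul₀ hw]
    refine ⟨hwb, ?_⟩
    have := congrArg (⟪·, c⟫_ℝ) hwb
    simp only [inner_add_left, real_inner_smul_left] at this
    linear_combination this
  obtain ⟨hxz, hx'⟩ := key x hx rfl
  obtain ⟨hyz, hy'⟩ := key y hy hxy.symm
  have hden : ⟪x, c⟫_ℝ + d = ⟪y, c⟫_ℝ + d :=
    mul_right_cancel₀ (right_ne_zero_of_mul (hx'.trans_ne hD)) (hx'.trans hy'.symm)
  rw [← add_left_inj b, hxz, hyz, hden]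

theorem inner_neg_add_inner_add (a₀ v x : E) (t : ℝ) :
    ⟪x, -v⟫_ℝ + (⟪a₀, v⟫_ℝ + t) = t + ⟪a₀ - x, v⟫_ℝ := by
  rw [inner_neg_right, inner_sub_left]
  ring

/-- The linear map of `E × ℝ` with block matrix `[[1, b], [c, d]]`, of determinant `d - ⟪b, c⟫`,
whose projectivization is `fracLinear b c d`. -/
theorem bijective_fracLinear_lift {b c : E} {d : ℝ} (hD : d - ⟪b, c⟫_ℝ ≠ 0) :
    Function.Bijective (fun p : E × ℝ => (p.1 + p.2 • b, ⟪p.1, c⟫_ℝ + p.2 * d)) := by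
  rw [Function.bijective_iff_has_inverse]
  refine ⟨fun q => (q.1 - ((q.2 - ⟪q.1, c⟫_ℝ) / (d - ⟪b, c⟫_ℝ)) • b,
    (q.2 - ⟪q.1, c⟫_ℝ) / (d - ⟪b, c⟫_ℝ)), fun p => ?_, fun q => ?_⟩
  · have : (⟪p.1, c⟫_ℝ + p.2 * d - ⟪p.1 + p.2 • b, c⟫_ℝ) / (d - ⟪b, c⟫_ℝ) = p.2 := by
      rw [inner_add_left, real_inner_smul_left]
      field_simp
      ring
    simp only [this, add_sub_cancel_right]
  · have : (q.2 - ⟪q.1, c⟫_ℝ) / (d - ⟪b, c⟫_ℝ) * (d - ⟪b, c⟫_ℝ) = q.2 - ⟪q.1, c⟫_ℝ :=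
      div_mul_cancel₀ _ hD
    ext
    · simp
    · simp only [inner_sub_left, real_inner_smul_left]
      linear_combination this

theorem hasFDerivWithinAt_fderiv_fracLinear {b c : E} {d : ℝ} {s : Set E}
    (hs : ∀ x ∈ s, ⟪x, c⟫_ℝ + d ≠ 0) (x : E) (hx : x ∈ s) :
    HasFDerivWithinAt (fracLinear b c d) (fderiv ℝ (fracLinear b c d) x) s x :=
  (hasFDerivAt_fracLinear b c d (hs x hx)).differentiableAt.hasFDerivAt.hasFDerivWithinAt

variable [FiniteDimensional ℝ E]

theorem exists_inner_lt_of_notMem {B : Set E} (hB : IsClosed B) (hBc : Convex ℝ B) {a : E}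
    (ha : a ∉ B) : ∃ (v : E) (s : ℝ), (∀ x ∈ B, ⟪x, v⟫_ℝ < s) ∧ s < ⟪a, v⟫_ℝ := by
  obtain ⟨g, s, hgB, hga⟩ := geometric_hahn_banach_closed_point hBc hB ha
  have hg : ∀ x, g x = ⟪x, (InnerProductSpace.toDual ℝ E).symm g⟫_ℝ := fun x => by
    rw [real_inner_comm, InnerProductSpace.toDual_symm_apply]
  exact ⟨_, s, fun x hx => hg x ▸ hgB x hx, hg a ▸ hga⟩

theorem det_fderiv_fracLinear (b c : E) (d : ℝ) {x : E} (hx : ⟪x, c⟫_ℝ + d ≠ 0) :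
    (fderiv ℝ (fracLinear b c d) x).det
      = (d - ⟪b, c⟫_ℝ) / (⟪x, c⟫_ℝ + d) ^ (finrank ℝ E + 1) := by
  rw [(hasFDerivAt_fracLinear b c d hx).fderiv]
  set ℓ := ⟪x, c⟫_ℝ + d with hℓ
  have hlin : ((ℓ⁻¹ • (ContinuousLinearMap.id ℝ E
        - (ℓ⁻¹ • innerSL ℝ c).smulRight (x + b)) : E →L[ℝ] E) : E →ₗ[ℝ] E)
      = ℓ⁻¹ • (LinearMap.id + (-ℓ⁻¹ • (innerSL ℝ c : E →ₗ[ℝ] ℝ)).smulRight (x + b)) := by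
    ext y
    simp [sub_eq_add_neg, add_comm]
  rw [ContinuousLinearMap.det, hlin, LinearMap.det_smul, LinearMap.det_id_add_smulRight]
  simp only [LinearMap.smul_apply, ContinuousLinearMap.coe_coe, innerSL_apply_apply,
    smul_eq_mul, real_inner_comm _ c, inner_add_left, inv_pow]
  field_simp
  rw [hℓ]
  ring

variable {b c : E} {d : ℝ} {s : Set E}

theorem abs_det_fderiv_fracLinear {x : E} (hx : 0 < ⟪x, c⟫_ℝ + d) :
    |(fderiv ℝ (fracLinear b c d) x).det|
      = |d - ⟪b, c⟫_ℝ| / (⟪x, c⟫_ℝ + d) ^ (finrank ℝ E + 1) := by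
  rw [det_fderiv_fracLinear b c d hx.ne', abs_div, abs_of_pos (pow_pos hx _)]

variable [MeasurableSpace E] [BorelSpace E] (μ : Measure E) [μ.IsAddHaarMeasure]

theorem addHaar_image_fracLinear_le (hs : MeasurableSet s) {α : ℝ} (hα : 0 < α)
    (hsα : ∀ x ∈ s, α ≤ ⟪x, c⟫_ℝ + d) :
    μ (fracLinear b c d '' s) ≤ ENNReal.ofReal (|d - ⟪b, c⟫_ℝ| / α ^ (finrank ℝ E + 1)) * μ s := by
  have hpos : ∀ x ∈ s, 0 < ⟪x, c⟫_ℝ + d := fun x hx => hα.trans_le (hsα x hx)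
  calc μ (fracLinear b c d '' s)
      ≤ ∫⁻ x in s, ENNReal.ofReal |(fderiv ℝ (fracLinear b c d) x).det| ∂μ :=
        addHaar_image_le_lintegral_abs_det_fderiv μ hs
          (hasFDerivWithinAt_fderiv_fracLinear fun x hx => (hpos x hx).ne')
    _ ≤ ∫⁻ _ in s, ENNReal.ofReal (|d - ⟪b, c⟫_ℝ| / α ^ (finrank ℝ E + 1)) ∂μ := by
        refine setLIntegral_mono' hs fun x hx => ENNReal.ofReal_le_ofReal ?_
        rw [abs_det_fderiv_fracLinear (hpos x hx)]
        gcongr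
        exact hsα x hx
    _ = _ := setLIntegral_const s _

theorem le_addHaar_image_fracLinear (hs : MeasurableSet s) {β : ℝ}
    (hs₀ : ∀ x ∈ s, 0 < ⟪x, c⟫_ℝ + d) (hsβ : ∀ x ∈ s, ⟪x, c⟫_ℝ + d ≤ β) :
    ENNReal.ofReal (|d - ⟪b, c⟫_ℝ| / β ^ (finrank ℝ E + 1)) * μ s ≤ μ (fracLinear b c d '' s) := by
  rcases eq_or_ne (d - ⟪b, c⟫_ℝ) 0 with hD | hD
  · simp [hD]
  calc ENNReal.ofReal (|d - ⟪b, c⟫_ℝ| / β ^ (finrank ℝ E + 1)) * μ s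
      = ∫⁻ _ in s, ENNReal.ofReal (|d - ⟪b, c⟫_ℝ| / β ^ (finrank ℝ E + 1)) ∂μ :=
        (setLIntegral_const s _).symm
    _ ≤ ∫⁻ x in s, ENNReal.ofReal |(fderiv ℝ (fracLinear b c d) x).det| ∂μ := by
        refine setLIntegral_mono' hs fun x hx => ENNReal.ofReal_le_ofReal ?_
        have hx₀ := hs₀ x hx
        rw [abs_det_fderiv_fracLinear hx₀]
        gcongr
        exact hsβ x hx
    _ ≤ μ (fracLinear b c d '' s) :=
        lintegral_abs_det_fderiv_le_addHaar_image μ hs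
          (hasFDerivWithinAt_fderiv_fracLinear fun x hx => (hs₀ x hx).ne')
          ((injOn_fracLinear hD).mono fun x hx => (hs₀ x hx).ne')

theorem le_addHaar_image_fracLinear_of_isMaxOn {A : Set E} (hA : IsCompact A)
    (hAc : Convex ℝ A) {a₀ v : E} {W : ℝ} (ha₀ : a₀ ∈ A) (hmax : IsMaxOn (⟪·, v⟫_ℝ) A a₀)
    (hW : ∀ x ∈ A, ⟪a₀ - x, v⟫_ℝ ≤ W) {t : ℝ} (ht₀ : 0 < t) (ht₁ : t ≤ 1) :
    ENNReal.ofReal (1 / (1 + W) ^ (finrank ℝ E + 1)) * μ A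
      ≤ μ (fracLinear (-a₀) (-v) (⟪a₀, v⟫_ℝ + t) '' A) := by
  have hgap : ∀ x ∈ A, 0 ≤ ⟪a₀ - x, v⟫_ℝ := fun x hx => by
    rw [inner_sub_left, sub_nonneg]; exact hmax hx
  have hW₀ : 0 < 1 + W := by linarith [hgap a₀ ha₀, hW a₀ ha₀]
  set S := AffineMap.homothety a₀ t '' A
  have hSA : S ⊆ A := hAc.image_homothety_subset ha₀ ht₀.le ht₁
  have hS : IsCompact S := hA.image (AffineMap.homothety_continuous a₀ t)
  have hdenS : ∀ x ∈ A, ⟪AffineMap.homothety a₀ t x, -v⟫_ℝ + (⟪a₀, v⟫_ℝ + t)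
      = t * (1 + ⟪a₀ - x, v⟫_ℝ) := fun x _ => by
    have : a₀ - AffineMap.homothety a₀ t x = t • (a₀ - x) := by
      rw [AffineMap.homothety_apply, vsub_eq_sub, vadd_eq_add]
      module
    rw [inner_neg_add_inner_add, this, real_inner_smul_left]
    ring
  have hvolS : μ S = ENNReal.ofReal (t ^ finrank ℝ E) * μ A := by
    rw [Measure.addHaar_image_homothety, abs_of_pos (pow_pos ht₀ _)]
  calc ENNReal.ofReal (1 / (1 + W) ^ (finrank ℝ E + 1)) * μ A
      = ENNReal.ofReal (|⟪a₀, v⟫_ℝ + t - ⟪-a₀, -v⟫_ℝ| / (t * (1 + W)) ^ (finrank ℝ E + 1))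
          * μ S := by
        rw [hvolS, ← mul_assoc, ← ENNReal.ofReal_mul (by positivity), inner_neg_neg,
          add_sub_cancel_left, abs_of_pos ht₀]
        congr 2
        rw [mul_pow, pow_succ t]
        field_simp
    _ ≤ μ (fracLinear (-a₀) (-v) (⟪a₀, v⟫_ℝ + t) '' S) := by
        refine le_addHaar_image_fracLinear μ hS.measurableSet ?_ ?_ <;>
          rintro _ ⟨x, hx, rfl⟩ <;> rw [hdenS x hx]
        · exact mul_pos ht₀ (by linarith [hgap x hx])
        · exact mul_le_mul_of_nonneg_left (by linarith [hW x hx]) ht₀.le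
    _ ≤ μ (fracLinear (-a₀) (-v) (⟪a₀, v⟫_ℝ + t) '' A) := measure_mono (image_mono hSA)

theorem tendsto_addHaar_image_fracLinear_of_inner_le {B : Set E} (hB : MeasurableSet B)
    (hBμ : μ B ≠ ⊤) {a₀ v : E} {s : ℝ} (hBs : ∀ x ∈ B, ⟪x, v⟫_ℝ ≤ s) (hs : s < ⟪a₀, v⟫_ℝ) :
    Tendsto (fun t => μ (fracLinear (-a₀) (-v) (⟪a₀, v⟫_ℝ + t) '' B)) (𝓝[>] 0) (𝓝 0) := by
  have hupper : ∀ t ∈ Ioi (0 : ℝ), μ (fracLinear (-a₀) (-v) (⟪a₀, v⟫_ℝ + t) '' B)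
      ≤ ENNReal.ofReal (t / (⟪a₀, v⟫_ℝ - s) ^ (finrank ℝ E + 1)) * μ B := fun t ht => by
    have := addHaar_image_fracLinear_le μ (b := -a₀) (c := -v) (d := ⟪a₀, v⟫_ℝ + t) hB
      (sub_pos.2 hs) fun x hx => by
        rw [inner_neg_add_inner_add, inner_sub_left]
        linarith [hBs x hx, mem_Ioi.1 ht]
    rwa [inner_neg_neg, add_sub_cancel_left, abs_of_pos (mem_Ioi.1 ht)] at this
  have hlim : Tendsto (fun t => ENNReal.ofReal (t / (⟪a₀, v⟫_ℝ - s) ^ (finrank ℝ E + 1)) * μ B)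
      (𝓝[>] 0) (𝓝 0) := by
    rw [← zero_mul (μ B), ← ENNReal.ofReal_zero]
    refine ENNReal.Tendsto.mul_const (ENNReal.tendsto_ofReal ?_) (Or.inr hBμ)
    exact tendsto_nhdsWithin_of_tendsto_nhds
      (by simpa using (continuous_id.div_const _).tendsto (0 : ℝ))
  exact tendsto_of_tendsto_of_tendsto_of_le_of_le' tendsto_const_nhds hlim
    (Eventually.of_forall fun _ => zero_le) (eventually_nhdsWithin_of_forall hupper)

theorem subset_of_forall_addHaar_image_fracLinear_le {A B : Set E} (hA : IsCompact A)
    (hAc : Convex ℝ A) (hA₀ : μ A ≠ 0) (hB : IsClosed B) (hBc : Convex ℝ B) (hBμ : μ B ≠ ⊤)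
    (h : ∀ (b c : E) (d : ℝ), d - ⟪b, c⟫_ℝ ≠ 0 → (∀ x ∈ A ∪ B, 0 < ⟪x, c⟫_ℝ + d) →
      μ (fracLinear b c d '' A) ≤ μ (fracLinear b c d '' B)) :
    A ⊆ B := by
  intro a haA
  by_contra haB
  obtain ⟨v, s, hBs, hsa⟩ := exists_inner_lt_of_notMem hB hBc haB
  have hcont : ContinuousOn (⟪·, v⟫_ℝ) A := (continuous_id.inner continuous_const).continuousOn
  obtain ⟨a₀, ha₀, hmax⟩ : ∃ a₀ ∈ A, ∀ x ∈ A, ⟪x, v⟫_ℝ ≤ ⟪a₀, v⟫_ℝ :=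
    hA.exists_isMaxOn ⟨a, haA⟩ hcont
  obtain ⟨a₁, ha₁, hmin⟩ : ∃ a₁ ∈ A, ∀ x ∈ A, ⟪a₁, v⟫_ℝ ≤ ⟪x, v⟫_ℝ :=
    hA.exists_isMinOn ⟨a, haA⟩ hcont
  have hsa₀ : s < ⟪a₀, v⟫_ℝ := hsa.trans_le (hmax a haA)
  set C := ENNReal.ofReal (1 / (1 + (⟪a₀, v⟫_ℝ - ⟪a₁, v⟫_ℝ)) ^ (finrank ℝ E + 1)) * μ A
  have hC : 0 < C := by
    have := hmax a₁ ha₁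
    exact ENNReal.mul_pos (ENNReal.ofReal_pos.2 (by positivity)).ne' hA₀
  have hlim := tendsto_addHaar_image_fracLinear_of_inner_le μ hB.measurableSet hBμ
    (fun x hx => (hBs x hx).le) hsa₀
  obtain ⟨t, hsmall, ht₀, ht₁⟩ :=
    ((hlim.eventually (gt_mem_nhds hC)).and (Ioc_mem_nhdsGT one_pos)).exists
  have hadm : ∀ x ∈ A ∪ B, 0 < ⟪x, -v⟫_ℝ + (⟪a₀, v⟫_ℝ + t) := by
    rintro x (hx | hx) <;> rw [inner_neg_add_inner_add, inner_sub_left]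
    · linarith [hmax x hx]
    · linarith [hBs x hx]
  have hD : ⟪a₀, v⟫_ℝ + t - ⟪-a₀, -v⟫_ℝ ≠ 0 := by
    rw [inner_neg_neg, add_sub_cancel_left]
    exact ht₀.ne'
  have hlower := le_addHaar_image_fracLinear_of_isMaxOn μ hA hAc ha₀ hmax
    (W := ⟪a₀, v⟫_ℝ - ⟪a₁, v⟫_ℝ)
    (fun x hx => by rw [inner_sub_left]; linarith [hmin x hx]) ht₀ ht₁
  exact hsmall.not_ge (hlower.trans (h _ _ _ hD hadm))

end FracLinear

theorem subset_of_volume_projective_positions_le_general (n : ℕ)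
    (A B : Set (EuclideanSpace ℝ (Fin n)))
    (hA₁ : IsCompact A) (hA₂ : Convex ℝ A) (hA₃ : (interior A).Nonempty)
    (hB₁ : IsCompact B) (hB₂ : Convex ℝ B)
    (h : ∀ (M : EuclideanSpace ℝ (Fin n) →ₗ[ℝ] EuclideanSpace ℝ (Fin n))
        (b c : EuclideanSpace ℝ (Fin n)) (d : ℝ),
        Function.Bijective (fun p : EuclideanSpace ℝ (Fin n) × ℝ =>
          (M p.1 + p.2 • b, (inner ℝ p.1 c : ℝ) + p.2 * d)) →
        (∀ x ∈ A ∪ B, 0 < (inner ℝ x c : ℝ) + d) →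
        volume ((fun x => ((inner ℝ x c : ℝ) + d)⁻¹ • (M x + b)) '' A) ≤
          volume ((fun x => ((inner ℝ x c : ℝ) + d)⁻¹ • (M x + b)) '' B)) :
    A ⊆ B :=
  subset_of_forall_addHaar_image_fracLinear_le volume hA₁ hA₂
    (Measure.measure_pos_of_nonempty_interior _ hA₃).ne' hB₁.isClosed hB₂ hB₁.measure_lt_top.ne
    fun b c d hD hadm => h LinearMap.id b c d (bijective_fracLinear_lift hD) hadm

/-- **Theorem (volume of projective positions identifies inclusion).**
Let `A`, `B` be convex bodies in `ℝⁿ`, `n ≥ 1`.  A fractional linear map is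
`F(x) = (Mx + b)/(⟨x,c⟩ + d)` with the block matrix `[[M,b],[c,d]]` invertible
(expressed here as bijectivity of the associated linear map on `ℝⁿ × ℝ`);
it is admissible for `A` and `B` when `A ∪ B ⊆ {x : ⟨x,c⟩ + d > 0}`.
If `vol(F(A)) ≤ vol(F(B))` for every admissible fractional linear map `F`,
then `A ⊆ B`. -/
theorem subset_of_volume_projective_positions_le (n : ℕ) (hn : 1 ≤ n)
    (A B : Set (EuclideanSpace ℝ (Fin n)))
    (hA₁ : IsCompact A) (hA₂ : Convex ℝ A) (hA₃ : (interior A).Nonempty)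
    (hB₁ : IsCompact B) (hB₂ : Convex ℝ B) (hB₃ : (interior B).Nonempty)
    (h : ∀ (M : EuclideanSpace ℝ (Fin n) →ₗ[ℝ] EuclideanSpace ℝ (Fin n))
        (b c : EuclideanSpace ℝ (Fin n)) (d : ℝ),
        Function.Bijective (fun p : EuclideanSpace ℝ (Fin n) × ℝ =>
          (M p.1 + p.2 • b, (inner ℝ p.1 c : ℝ) + p.2 * d)) →
        (∀ x ∈ A ∪ B, 0 < (inner ℝ x c : ℝ) + d) →
        volume ((fun x => ((inner ℝ x c : ℝ) + d)⁻¹ • (M x + b)) '' A) ≤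
          volume ((fun x => ((inner ℝ x c : ℝ) + d)⁻¹ • (M x + b)) '' B)) :
    A ⊆ B :=
  subset_of_volume_projective_positions_le_general n A B hA₁ hA₂ hA₃ hB₁ hB₂ h
end

section
/- Let n ≥ 1 and let A, B be centrally symmetric convex bodies in ℝⁿ. If for every convex body K in ℝⁿ one has vol(A + K) ≤ vol(B + K), then A ⊆ B. -/
/-!
If `a ∈ A \ B`, separating `a` from the symmetric body `B` gives a unit vector `u` with
`|⟪u, p⟫| ≤ c < ⟪u, a⟫` for all `p ∈ B`. Take for `K` a box, in an orthonormal basis containing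
`u`, of half-width `1` along `u` and `R` in the other directions. As `A ⊇ [-a, a]`, the sum
`A + K` contains a box of half-widths `⟪u, a⟫ + 1` along `u` and `R - O(1)` otherwise, while
`B + K` lies in a box of half-widths `c + 1` and `R + O(1)`. Comparing volumes and letting
`R → ∞` gives `⟪u, a⟫ + 1 ≤ c + 1`, a contradiction.
-/

open MeasureTheory Pointwise RealInnerProductSpace Filter Set Function Topology

theorem Fintype.prod_update_const {ι M : Type*} [Fintype ι] [DecidableEq ι] [CommMonoid M]
    (i : ι) (a b : M) : ∏ j, update (fun _ => a) i b j = b * a ^ (Fintype.card ι - 1) := by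
  rw [Finset.prod_update_of_mem (Finset.mem_univ i), Finset.prod_const, Finset.card_univ_sdiff,
    Finset.card_singleton]

theorem exists_abs_le_abs_sub_le {x t s : ℝ} (ht : 0 ≤ t) (hs : 0 ≤ s) (hx : |x| ≤ t + s) :
    ∃ p, |p| ≤ t ∧ |x - p| ≤ s := by
  refine ⟨max (-t) (min t x), ?_, ?_⟩ <;> rw [abs_le] at * <;> constructor <;>
    simp only [max_def, min_def] <;> split_ifs <;> linarith

theorem le_of_forall_mul_pow_le_mul_add_pow {a b M : ℝ} (m : ℕ)
    (h : ∀ R > 0, a * R ^ m ≤ b * (R + M) ^ m) : a ≤ b := by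
  have hlim : Tendsto (fun R : ℝ => b * (1 + M / R) ^ m) atTop (𝓝 (b * (1 + 0) ^ m)) :=
    ((tendsto_const_nhds.add (tendsto_const_nhds.div_atTop tendsto_id)).pow m).const_mul b
  rw [add_zero, one_pow, mul_one] at hlim
  refine ge_of_tendsto hlim ((eventually_gt_atTop 0).mono fun R hR => ?_)
  rw [← div_self hR.ne', ← add_div, div_pow, ← mul_div_assoc, le_div_iff₀ (pow_pos hR m)]
  exact h R hR

variable {E ι : Type*} [NormedAddCommGroup E] [InnerProductSpace ℝ E] [Fintype ι]

namespace OrthonormalBasis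

variable (b : OrthonormalBasis ι ℝ E)

def coordBox (w : ι → ℝ) : Set E := {x | ∀ i, |⟪b i, x⟫| ≤ w i}

theorem coordBox_eq_preimage (w : ι → ℝ) :
    b.coordBox w = b.repr ⁻¹' (WithLp.ofLp ⁻¹' univ.pi fun i => Icc (-w i) (w i)) := by
  ext x
  simp only [coordBox, mem_ofPred_eq, mem_preimage, mem_univ_pi, mem_Icc, abs_le,
    b.repr_apply_apply]

theorem isCompact_coordBox (w : ι → ℝ) : IsCompact (b.coordBox w) := by
  rw [coordBox_eq_preimage]
  exact b.repr.toHomeomorph.isCompact_preimage.2 ((PiLp.homeomorph 2 _).isCompact_preimage.2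
    (isCompact_univ_pi fun _ => isCompact_Icc))

theorem convex_coordBox (w : ι → ℝ) : Convex ℝ (b.coordBox w) := by
  rw [coordBox_eq_preimage]
  exact ((convex_pi fun i _ => convex_Icc _ _).linear_preimage
    (WithLp.linearEquiv 2 ℝ (ι → ℝ)).toLinearMap).linear_preimage b.repr.toLinearEquiv.toLinearMap

theorem interior_coordBox_nonempty {w : ι → ℝ} (hw : ∀ i, 0 < w i) :
    (interior (b.coordBox w)).Nonempty := by
  have hopen : IsOpen {x : E | ∀ i, |⟪b i, x⟫| < w i} := by
    simp only [ofPred_forall]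
    exact isOpen_iInter_of_finite fun i =>
      isOpen_lt (continuous_const.inner continuous_id).abs continuous_const
  exact ⟨0, interior_maximal (fun x (hx : ∀ i, _ < _) i => (hx i).le) hopen
    fun i => by simpa using hw i⟩

theorem volume_coordBox [MeasurableSpace E] [BorelSpace E] [FiniteDimensional ℝ E]
    {w : ι → ℝ} (hw : 0 ≤ w) :
    volume (b.coordBox w) = ENNReal.ofReal (2 ^ Fintype.card ι * ∏ i, w i) := by
  have hrepr : MeasurePreserving (fun x => WithLp.ofLp (b.repr x)) volume volume :=
    (EuclideanSpace.volume_preserving_symm_measurableEquiv_toLp ι).comp b.measurePreserving_repr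
  rw [coordBox_eq_preimage]
  refine (hrepr.measure_preimage
    (MeasurableSet.univ_pi fun _ => measurableSet_Icc).nullMeasurableSet).trans ?_
  rw [volume_pi_pi]
  simp only [Real.volume_Icc, sub_neg_eq_add, ← two_mul]
  rw [← ENNReal.ofReal_prod_of_nonneg fun i _ => mul_nonneg zero_le_two (hw i),
    Finset.prod_mul_distrib, Finset.prod_const, Finset.card_univ]

theorem coordBox_add_subset (w w' : ι → ℝ) :
    b.coordBox w + b.coordBox w' ⊆ b.coordBox (w + w') := by
  rintro _ ⟨x, hx, y, hy, rfl⟩ i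
  rw [inner_add_right]
  exact (abs_add_le _ _).trans (add_le_add (hx i) (hy i))

theorem abs_inner_le_norm (i : ι) (x : E) : |⟪b i, x⟫| ≤ ‖x‖ := by
  simpa [b.norm_eq_one] using abs_real_inner_le_norm (b i) x

theorem coordBox_update_subset_segment_add [DecidableEq ι] (i₀ : ι) {a : E}
    (ha : 0 ≤ ⟪b i₀, a⟫) (R : ℝ) :
    b.coordBox (update (fun _ => R) i₀ (⟪b i₀, a⟫ + 1)) ⊆
      segment ℝ (-a) a + b.coordBox (update (fun _ => R + ‖a‖) i₀ 1) := by
  intro x hx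
  obtain ⟨p, hp, hxp⟩ := exists_abs_le_abs_sub_le ha zero_le_one (by simpa using hx i₀)
  obtain ⟨y, hy, rfl⟩ : p ∈ (innerₛₗ ℝ (b i₀)).toAffineMap '' segment ℝ (-a) a := by
    rw [image_segment, segment_eq_uIcc]
    simpa [uIcc_of_le (neg_le_self ha), abs_le] using hp
  have hya : ‖y‖ ≤ ‖a‖ :=
    mem_closedBall_zero_iff.1 ((convex_closedBall 0 ‖a‖).segment_subset (by simp) (by simp) hy)
  refine ⟨y, hy, x - y, fun i => ?_, add_sub_cancel y x⟩
  rw [inner_sub_right]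
  rcases eq_or_ne i i₀ with rfl | hi
  · simpa using hxp
  · simpa [hi] using (abs_sub _ _).trans (add_le_add (by simpa [hi] using hx i)
      ((b.abs_inner_le_norm i y).trans hya))

theorem subset_coordBox_update [DecidableEq ι] {B : Set E} (i₀ : ι) {c M : ℝ}
    (hc : ∀ p ∈ B, |⟪b i₀, p⟫| ≤ c) (hM : ∀ p ∈ B, ‖p‖ ≤ M) :
    B ⊆ b.coordBox (update (fun _ => M) i₀ c) := by
  intro p hp i
  rcases eq_or_ne i i₀ with rfl | hi
  · simpa using hc p hp
  · simpa [hi] using (b.abs_inner_le_norm i p).trans (hM p hp)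

theorem prod_le_of_volume_coordBox_le [MeasurableSpace E] [BorelSpace E] [FiniteDimensional ℝ E]
    {w w' : ι → ℝ} (hw : 0 ≤ w) (hw' : 0 ≤ w')
    (h : volume (b.coordBox w) ≤ volume (b.coordBox w')) : ∏ i, w i ≤ ∏ i, w' i := by
  rw [b.volume_coordBox hw, b.volume_coordBox hw',
    ENNReal.ofReal_le_ofReal_iff
    (mul_nonneg (by positivity) (Finset.prod_nonneg fun i _ => hw' i))] at h
  exact le_of_mul_le_mul_left h (by positivity)

end OrthonormalBasis

theorem exists_norm_eq_one_abs_inner_le_lt [CompleteSpace E] {B : Set E} {a : E}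
    (hB : Convex ℝ B) (hBc : IsClosed B) (hBne : B.Nonempty) (hBsymm : B = -B) (ha : a ∉ B) :
    ∃ u : E, ‖u‖ = 1 ∧ ∃ c, (∀ p ∈ B, |⟪u, p⟫| ≤ c) ∧ c < ⟪u, a⟫ := by
  obtain ⟨f, s, hfB, hfa⟩ := geometric_hahn_banach_closed_point hB hBc ha
  have habs : ∀ p ∈ B, |f p| < s := fun p hp => by
    have hp' : -p ∈ B := by rw [hBsymm]; exact neg_mem_neg.2 hp
    exact abs_lt.2 ⟨by linarith [hfB _ hp', map_neg f p], hfB p hp⟩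
  set v := (InnerProductSpace.toDual ℝ E).symm f
  have hv : ∀ x, ⟪v, x⟫ = f x := fun x => InnerProductSpace.toDual_symm_apply
  have hv0 : 0 < ‖v‖ := norm_pos_iff.2 fun h0 => by
    obtain ⟨p₀, hp₀⟩ := hBne
    have hfa0 := hv a
    rw [h0, inner_zero_left] at hfa0
    linarith [(abs_nonneg _).trans_lt (habs p₀ hp₀)]
  refine ⟨‖v‖⁻¹ • v, norm_smul_inv_norm (norm_pos_iff.1 hv0), ‖v‖⁻¹ * s, fun p hp => ?_, ?_⟩
  · rw [real_inner_smul_left, hv, abs_mul, abs_inv, abs_norm]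
    exact mul_le_mul_of_nonneg_left (habs p hp).le (inv_nonneg.2 hv0.le)
  · rw [real_inner_smul_left, hv]
    exact mul_lt_mul_of_pos_left hfa (inv_pos.2 hv0)

theorem exists_orthonormalBasis_apply_eq [FiniteDimensional ℝ E] {u : E} (hu : ‖u‖ = 1) :
    ∃ (s : Finset E) (b : OrthonormalBasis s ℝ E) (i₀ : s), b i₀ = u := by
  have hortho : Orthonormal ℝ ((↑) : ({u} : Set E) → E) :=
    orthonormal_subsingleton_iff.2 fun v => by rw [mem_singleton_iff.1 v.2, hu]
  obtain ⟨s, b, hus, hb⟩ := hortho.exists_orthonormalBasis_extension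
  exact ⟨s, b, ⟨u, hus rfl⟩, by rw [hb]⟩

theorem Convex.subset_of_forall_volume_add_le [FiniteDimensional ℝ E] [MeasurableSpace E]
    [BorelSpace E] {A B : Set E} (hA : Convex ℝ A) (hAsymm : A = -A) (hBcpt : IsCompact B)
    (hB : Convex ℝ B) (hBne : B.Nonempty) (hBsymm : B = -B)
    (h : ∀ K : Set E, IsCompact K → Convex ℝ K → (interior K).Nonempty →
      volume (A + K) ≤ volume (B + K)) :
    A ⊆ B := by
  classical
  intro a ha
  by_contra haB
  obtain ⟨u, hu, c, hBc, hca⟩ :=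
    exists_norm_eq_one_abs_inner_le_lt hB hBcpt.isClosed hBne hBsymm haB
  obtain ⟨p₀, hp₀⟩ := hBne
  have hc : 0 ≤ c := (abs_nonneg _).trans (hBc p₀ hp₀)
  obtain ⟨M, hM⟩ := hBcpt.isBounded.exists_norm_le
  have hM0 : 0 ≤ M := (norm_nonneg _).trans (hM p₀ hp₀)
  obtain ⟨s, b, i₀, rfl⟩ := exists_orthonormalBasis_apply_eq hu
  have ha0 : 0 ≤ ⟪b i₀, a⟫ := hc.trans hca.le
  have hsegment : segment ℝ (-a) a ⊆ A :=
    hA.segment_subset (by rw [hAsymm]; exact neg_mem_neg.2 ha) ha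
  have key : ∀ R > 0, (⟪b i₀, a⟫ + 1) * R ^ (Fintype.card s - 1) ≤
      (c + 1) * (R + (M + ‖a‖)) ^ (Fintype.card s - 1) := by
    intro R hR
    set K := b.coordBox (update (fun _ => R + ‖a‖) i₀ 1)
    have hAK : b.coordBox (update (fun _ => R) i₀ (⟪b i₀, a⟫ + 1)) ⊆ A + K :=
      (b.coordBox_update_subset_segment_add i₀ ha0 R).trans (add_subset_add_right hsegment)
    have hBK : B + K ⊆ b.coordBox (update (fun _ => M + (R + ‖a‖)) i₀ (c + 1)) :=
      (add_subset_add_right (b.subset_coordBox_update i₀ hBc hM)).trans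
        ((b.coordBox_add_subset _ _).trans_eq (by rw [← update_add]; rfl))
    have hK : (interior K).Nonempty := b.interior_coordBox_nonempty fun i => by
      rcases eq_or_ne i i₀ with rfl | hi
      · simp
      · simpa [hi] using add_pos_of_pos_of_nonneg hR (norm_nonneg a)
    have := b.prod_le_of_volume_coordBox_le (le_update_iff.2 ⟨by positivity, fun _ _ => hR.le⟩)
      (le_update_iff.2 ⟨by positivity, fun _ _ => by positivity⟩)
      ((measure_mono hAK).trans ((h K (b.isCompact_coordBox _) (b.convex_coordBox _) hK).trans
        (measure_mono hBK)))
    rw [Fintype.prod_update_const, Fintype.prod_update_const] at this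
    exact this.trans_eq (by ring)
  linarith [le_of_forall_mul_pow_le_mul_add_pow _ key]

theorem sum_comparison_symmetric_general (n : ℕ)
    (A B : Set (EuclideanSpace ℝ (Fin n)))
    (hA₂ : Convex ℝ A)
    (hB₁ : IsCompact B) (hB₂ : Convex ℝ B) (hB₃ : (interior B).Nonempty)
    (hAsymm : A = -A) (hBsymm : B = -B)
    (h : ∀ K : Set (EuclideanSpace ℝ (Fin n)),
        IsCompact K → Convex ℝ K → (interior K).Nonempty →
        volume (A + K) ≤ volume (B + K)) :
    A ⊆ B :=
  hA₂.subset_of_forall_volume_add_le hAsymm hB₁ hB₂ (hB₃.mono interior_subset) hBsymm h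

/-- **Theorem (symmetric case of Minkowski-sum comparison).**
If `A`, `B` are centrally symmetric convex bodies in `ℝⁿ` and
`vol(A + K) ≤ vol(B + K)` for every convex body `K`, then `A ⊆ B`. -/
theorem sum_comparison_symmetric (n : ℕ) (hn : 1 ≤ n)
    (A B : Set (EuclideanSpace ℝ (Fin n)))
    (hA₁ : IsCompact A) (hA₂ : Convex ℝ A) (hA₃ : (interior A).Nonempty)
    (hB₁ : IsCompact B) (hB₂ : Convex ℝ B) (hB₃ : (interior B).Nonempty)
    (hAsymm : A = -A) (hBsymm : B = -B)
    (h : ∀ K : Set (EuclideanSpace ℝ (Fin n)),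
        IsCompact K → Convex ℝ K → (interior K).Nonempty →
        volume (A + K) ≤ volume (B + K)) :
    A ⊆ B :=
  sum_comparison_symmetric_general n A B hA₂ hB₁ hB₂ hB₃ hAsymm hBsymm h
end

section
/- Let n ≥ 1, let K₀ be a convex body in ℝⁿ, and let A, B be centrally symmetric convex bodies in ℝⁿ. If for every linear map L : ℝⁿ → ℝⁿ one has vol(A + L(K₀)) ≤ vol(B + L(K₀)), then A ⊆ B. -/
/-!
Suppose `a ∈ A \ B`. Separate `a` from `B` by a functional `f`; by symmetry `|f| < c < f a` on
`B`. Split `E ≃ ℝ × ker f` with first coordinate `f` and let `L` be `l` times the projection onto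
`ker f` along `a`, so that `L K` becomes `{0} × l • S` with `S` the projection of `K`. Then
`B + L K` lies over the slab `|f| ≤ c` and, as `S` is a convex body, in a cylinder of volume
`2c (l + C)ᵈ vol S`, whereas `A + L K` contains the cylinder sheared along `[-a, a]`, of volume
`2 f(a) lᵈ vol S`. Letting `l → ∞` gives `f a ≤ c`. Haar measures on `E` and on `ℝ × ker f`
differ only by a constant factor, which does not affect the comparison.
-/

open MeasureTheory Measure Pointwise Set Filter Topology

theorem le_of_forall_mul_pow_le_mul_add_pow_s2 {t h c : ℝ} {d : ℕ}
    (H : ∀ l : ℝ, 0 < l → t * l ^ d ≤ h * (l + c) ^ d) : t ≤ h := by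
  have hlim : Tendsto (fun l : ℝ => h * (1 + c / l) ^ d) atTop (𝓝 h) := by
    simpa using (((tendsto_const_nhds.div_atTop tendsto_id).const_add 1).pow d).const_mul h
  refine ge_of_tendsto hlim ?_
  filter_upwards [eventually_gt_atTop 0] with l hl
  rw [← mul_le_mul_iff_left₀ (pow_pos hl d), mul_assoc, ← mul_pow, add_mul,
    div_mul_cancel₀ _ hl.ne', one_mul]
  exact H l hl

def LinearMap.equivProdKer {R M : Type*} [CommRing R] [AddCommGroup M] [Module R M]
    (f : M →ₗ[R] R) (e : M) (he : f e = 1) : M ≃ₗ[R] R × LinearMap.ker f where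
  toFun x := (f x, ⟨x - f x • e, by simp [he]⟩)
  invFun p := p.1 • e + p.2
  map_add' x y := by ext <;> simp [add_smul]; abel
  map_smul' r x := by ext <;> simp [smul_sub, mul_smul]
  left_inv x := by simp
  right_inv p := by ext <;> simp [he]

theorem ContinuousLinearEquiv.addHaar_le_of_addHaar_image_symm_le {E F : Type*}
    [AddCommGroup E] [TopologicalSpace E] [IsTopologicalAddGroup E] [Module ℝ E]
    [MeasurableSpace E] [BorelSpace E]
    [AddCommGroup F] [TopologicalSpace F] [IsTopologicalAddGroup F] [Module ℝ F]
    [MeasurableSpace F] [BorelSpace F] [LocallyCompactSpace F] [SecondCountableTopology F]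
    (T : E ≃L[ℝ] F) (μ : Measure E) [μ.IsAddHaarMeasure] (ν : Measure F) [ν.IsAddHaarMeasure]
    {X Y : Set F} (h : μ (T.symm '' X) ≤ μ (T.symm '' Y)) : ν X ≤ ν Y := by
  have hmap := isAddLeftInvariant_eq_smul (map T μ) ν
  have hpos := addHaarScalarFactor_pos_of_isAddHaarMeasure (map T μ) ν
  have hpre : ∀ Z, μ (T.symm '' Z) = addHaarScalarFactor (map T μ) ν * ν Z := fun Z => by
    rw [T.image_symm_eq_preimage]
    calc μ (T ⁻¹' Z) = map T μ Z := (T.toHomeomorph.toMeasurableEquiv.map_apply Z).symm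
      _ = _ := congrArg (· Z) hmap
  rw [hpre, hpre] at h
  exact (ENNReal.mul_le_mul_iff_right (by simpa using hpos.ne') ENNReal.coe_ne_top).1 h

theorem Bornology.IsBounded.exists_add_smul_subset_vadd_smul {G : Type*} [NormedAddCommGroup G]
    [NormedSpace ℝ G] {S Q : Set G} (hQ : Bornology.IsBounded Q) (hS : Convex ℝ S)
    (hSint : (interior S).Nonempty) :
    ∃ c ≥ 0, ∃ v : G, ∀ l : ℝ, 0 ≤ l → Q + l • S ⊆ v +ᵥ (l + c) • S := by
  obtain ⟨y, hy⟩ := hSint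
  have hnhds : -y +ᵥ S ∈ 𝓝 (0 : G) := by
    simpa using vadd_mem_nhds_vadd (-y) (mem_interior_iff_mem_nhds.1 hy)
  obtain ⟨r, hr, hQr⟩ := ((NormedSpace.isVonNBounded_iff ℝ).2 hQ hnhds).exists_pos
  refine ⟨r, hr.le, r • -y, fun l hl => ?_⟩
  have hr_smul : r • (-y +ᵥ S) = r • -y +ᵥ r • S := by
    simp only [← image_smul, ← image_vadd, image_image, vadd_eq_add, smul_add]
  calc Q + l • S ⊆ r • (-y +ᵥ S) + l • S :=
        add_subset_add_right (hQr r (by simp [abs_of_pos hr]))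
    _ = r • -y +ᵥ (l + r) • S := by
      rw [hr_smul, hS.add_smul hl hr.le, vadd_add_assoc, add_comm]

section

variable {G : Type*} [NormedAddCommGroup G] [NormedSpace ℝ G] [FiniteDimensional ℝ G]
  [MeasurableSpace G] [BorelSpace G]
  (μ : Measure G) [μ.IsAddHaarMeasure]

theorem measurePreserving_prod_add_smul (w : G) :
    MeasurePreserving (fun p : ℝ × G => (p.1, p.2 + p.1 • w))
      ((volume : Measure ℝ).prod μ) ((volume : Measure ℝ).prod μ) :=
  (MeasurePreserving.id volume).skew_product (by fun_prop)
    (Eventually.of_forall fun x => map_add_right_eq_self μ (x • w))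

theorem volume_Icc_mul_le_prod_add_zero_prod {A : Set (ℝ × G)} {a : ℝ × G} (ha : 0 < a.1)
    (hA : segment ℝ (-a) a ⊆ A) {X : Set G} (hX : MeasurableSet X) :
    volume (Icc (-a.1) a.1) * μ X ≤ ((volume : Measure ℝ).prod μ) (A + {0} ×ˢ X) := by
  -- this preimage is the cylinder `⋃ s ∈ [-1, 1], s • a + {0} ×ˢ X`, sheared along `[-a, a]`
  have hsub : (fun p : ℝ × G => (p.1, p.2 + p.1 • -(a.1⁻¹ • a.2))) ⁻¹' (Icc (-a.1) a.1 ×ˢ X)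
      ⊆ A + {0} ×ˢ X := by
    rintro ⟨x, y⟩ ⟨hx, hy⟩
    have hseg : (x / a.1) • a ∈ segment ℝ (-a) a := by
      refine ⟨(1 - x / a.1) / 2, (1 + x / a.1) / 2, ?_, ?_, by ring, ?_⟩
      · linarith [(div_le_one ha).2 hx.2]
      · linarith [(le_div_iff₀ ha).2 (by linarith [hx.1] : -1 * a.1 ≤ x)]
      · module
    refine ⟨(x / a.1) • a, hA hseg, (0, y + x • -(a.1⁻¹ • a.2)), ⟨rfl, hy⟩, ?_⟩
    ext
    · simp [div_mul_cancel₀ _ ha.ne']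
    · simp; module
  calc volume (Icc (-a.1) a.1) * μ X = ((volume : Measure ℝ).prod μ) (Icc (-a.1) a.1 ×ˢ X) :=
        (prod_prod _ _).symm
    _ = _ := ((measurePreserving_prod_add_smul μ _).measure_preimage
        (measurableSet_Icc.prod hX).nullMeasurableSet).symm
    _ ≤ _ := measure_mono hsub

theorem le_of_forall_prod_add_zero_prod_smul_le {A B : Set (ℝ × G)} {a : ℝ × G} (ha : 0 < a.1)
    (hA : segment ℝ (-a) a ⊆ A) {h : ℝ} {Q : Set G} (hB : B ⊆ Icc (-h) h ×ˢ Q)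
    (hQ : Bornology.IsBounded Q) {S : Set G} (hS : IsCompact S) (hSconv : Convex ℝ S)
    (hSint : (interior S).Nonempty)
    (hle : ∀ l : ℝ, 0 < l → ((volume : Measure ℝ).prod μ) (A + {0} ×ˢ (l • S)) ≤
      ((volume : Measure ℝ).prod μ) (B + {0} ×ˢ (l • S))) :
    a.1 ≤ h := by
  obtain ⟨c, hc, v, hQS⟩ := hQ.exists_add_smul_subset_vadd_smul hSconv hSint
  refine le_of_forall_mul_pow_le_mul_add_pow_s2 (d := Module.finrank ℝ G) (c := c) fun l hl => ?_
  have hlS : MeasurableSet (l • S) := (hS.smul l).isClosed.measurableSet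
  have key : ENNReal.ofReal ((a.1 - -a.1) * l ^ Module.finrank ℝ G) * μ S ≤
      ENNReal.ofReal ((h - -h) * (l + c) ^ Module.finrank ℝ G) * μ S := calc
    _ = volume (Icc (-a.1) a.1) * μ (l • S) := by
      rw [Real.volume_Icc, addHaar_smul_of_nonneg μ hl.le, ENNReal.ofReal_mul (by linarith),
        mul_assoc]
    _ ≤ ((volume : Measure ℝ).prod μ) (A + {0} ×ˢ (l • S)) :=
      volume_Icc_mul_le_prod_add_zero_prod μ ha hA hlS
    _ ≤ ((volume : Measure ℝ).prod μ) (B + {0} ×ˢ (l • S)) := hle l hl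
    _ ≤ ((volume : Measure ℝ).prod μ) ((Icc (-h) h + {0}) ×ˢ (Q + l • S)) := by
      rw [← prod_add_prod_comm]
      exact measure_mono (add_subset_add_right hB)
    _ ≤ volume (Icc (-h) h) * μ (v +ᵥ (l + c) • S) := by
      rw [singleton_zero, add_zero, prod_prod]
      gcongr
      exact hQS l hl.le
    _ = _ := by
      rw [measure_vadd, addHaar_smul_of_nonneg μ (by positivity), Real.volume_Icc,
        ENNReal.ofReal_mul' (by positivity), mul_assoc]
  rw [ENNReal.mul_le_mul_iff_left (measure_pos_of_nonempty_interior μ hSint).ne'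
    hS.measure_lt_top.ne, ENNReal.ofReal_le_ofReal_iff'] at key
  rcases key with key | key
  · linarith
  · nlinarith [pow_pos hl (Module.finrank ℝ G)]

end

theorem LinearEquiv.add_image_conj_inr_smul_snd {E G : Type*} [AddCommGroup E] [Module ℝ E]
    [AddCommGroup G] [Module ℝ G] (T : E ≃ₗ[ℝ] ℝ × G) (l : ℝ) (X K : Set E) :
    X + (T.symm.toLinearMap ∘ₗ LinearMap.inr ℝ ℝ G ∘ₗ (l • LinearMap.snd ℝ ℝ G) ∘ₗ
      T.toLinearMap) '' K = T.symm '' (T '' X + {0} ×ˢ (l • (Prod.snd '' (T '' K)))) := by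
  rw [image_add, image_image, singleton_prod, ← image_smul]
  simp only [LinearEquiv.symm_apply_apply, image_id', image_image]
  rfl

theorem exists_dual_abs_lt_lt_of_notMem {E : Type*} [NormedAddCommGroup E] [NormedSpace ℝ E]
    {B : Set E} (hconv : Convex ℝ B) (hclosed : IsClosed B) (hsymm : B = -B) (hne : B.Nonempty)
    {a : E} (ha : a ∉ B) : ∃ f : StrongDual ℝ E, ∃ c, 0 < c ∧ (∀ b ∈ B, |f b| < c) ∧ c < f a := by
  obtain ⟨f, c, hfB, hfa⟩ := geometric_hahn_banach_closed_point hconv hclosed ha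
  have hfB_abs : ∀ b ∈ B, |f b| < c := fun b hb => abs_lt.2
    ⟨by linarith [hfB (-b) (by rw [hsymm]; simpa using hb), map_neg f b], hfB b hb⟩
  obtain ⟨b, hb⟩ := hne
  exact ⟨f, c, (abs_nonneg _).trans_lt (hfB_abs b hb), hfB_abs, hfa⟩

theorem subset_of_forall_addHaar_add_image_le {E : Type*} [NormedAddCommGroup E]
    [NormedSpace ℝ E] [FiniteDimensional ℝ E] [MeasurableSpace E] [BorelSpace E]
    (μ : Measure E) [μ.IsAddHaarMeasure] {K A B : Set E} (hK : IsCompact K)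
    (hKconv : Convex ℝ K) (hKint : (interior K).Nonempty) (hA : Convex ℝ A) (hAsymm : A = -A)
    (hB : IsCompact B) (hBconv : Convex ℝ B) (hBne : B.Nonempty) (hBsymm : B = -B)
    (hle : ∀ L : E →ₗ[ℝ] E, μ (A + L '' K) ≤ μ (B + L '' K)) : A ⊆ B := by
  intro a ha
  by_contra haB
  obtain ⟨f, c, hc, hfB, hfa⟩ := exists_dual_abs_lt_lt_of_notMem hBconv hB.isClosed hBsymm hBne haB
  have he : f ((f a)⁻¹ • a) = 1 := by
    rw [map_smul, smul_eq_mul, inv_mul_cancel₀ (by linarith)]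
  let T := (f : E →ₗ[ℝ] ℝ).equivProdKer _ he
  have hna : -a ∈ A := by rw [hAsymm]; simpa using ha
  have hseg : segment ℝ (-T a) (T a) ⊆ T '' A :=
    (hA.linear_image T.toLinearMap).segment_subset ⟨-a, hna, map_neg T a⟩ (mem_image_of_mem T ha)
  have hslab : T '' B ⊆ Icc (-c) c ×ˢ (Prod.snd '' (T '' B)) := by
    rintro _ ⟨b, hb, rfl⟩
    exact ⟨abs_le.1 (hfB b hb).le, mem_image_of_mem _ (mem_image_of_mem _ hb)⟩
  have hSint : (interior (Prod.snd '' (T '' K))).Nonempty := by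
    rw [← image_comp]
    exact (hKint.image _).mono ((isOpenMap_snd.comp
      T.toContinuousLinearEquiv.toHomeomorph.isOpenMap).image_interior_subset K)
  have hTK : IsCompact (T '' K) := hK.image T.toContinuousLinearEquiv.continuous
  have hTB : IsCompact (T '' B) := hB.image T.toContinuousLinearEquiv.continuous
  refine hfa.not_ge (le_of_forall_prod_add_zero_prod_smul_le addHaar (lt_trans hc hfa) hseg hslab
    (hTB.image continuous_snd).isBounded (hTK.image continuous_snd)
    ((hKconv.linear_image T.toLinearMap).linear_image (LinearMap.snd ℝ ℝ _)) hSint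
    fun l _ => T.toContinuousLinearEquiv.addHaar_le_of_addHaar_image_symm_le μ _ ?_)
  have hL := hle (T.symm.toLinearMap ∘ₗ LinearMap.inr ℝ ℝ _ ∘ₗ (l • LinearMap.snd ℝ ℝ _) ∘ₗ
    T.toLinearMap)
  rwa [T.add_image_conj_inr_smul_snd, T.add_image_conj_inr_smul_snd] at hL

theorem sum_comparison_symmetric_linear_images_general (n : ℕ)
    (K₀ A B : Set (EuclideanSpace ℝ (Fin n)))
    (hK₁ : IsCompact K₀) (hK₂ : Convex ℝ K₀) (hK₃ : (interior K₀).Nonempty)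
    (hA₂ : Convex ℝ A)
    (hB₁ : IsCompact B) (hB₂ : Convex ℝ B) (hB₃ : (interior B).Nonempty)
    (hAsymm : A = -A) (hBsymm : B = -B)
    (h : ∀ L : EuclideanSpace ℝ (Fin n) →ₗ[ℝ] EuclideanSpace ℝ (Fin n),
        volume (A + L '' K₀) ≤ volume (B + L '' K₀)) :
    A ⊆ B :=
  subset_of_forall_addHaar_add_image_le volume hK₁ hK₂ hK₃ hA₂ hAsymm hB₁ hB₂
    (hB₃.mono interior_subset) hBsymm h

/-- **Theorem (symmetric case, linear images of a fixed body suffice).**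
If `A`, `B` are centrally symmetric convex bodies in `ℝⁿ`, `K₀` a convex body,
and `vol(A + L(K₀)) ≤ vol(B + L(K₀))` for every linear map `L : ℝⁿ → ℝⁿ`
(possibly degenerate), then `A ⊆ B`. -/
theorem sum_comparison_symmetric_linear_images (n : ℕ) (hn : 1 ≤ n)
    (K₀ A B : Set (EuclideanSpace ℝ (Fin n)))
    (hK₁ : IsCompact K₀) (hK₂ : Convex ℝ K₀) (hK₃ : (interior K₀).Nonempty)
    (hA₁ : IsCompact A) (hA₂ : Convex ℝ A) (hA₃ : (interior A).Nonempty)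
    (hB₁ : IsCompact B) (hB₂ : Convex ℝ B) (hB₃ : (interior B).Nonempty)
    (hAsymm : A = -A) (hBsymm : B = -B)
    (h : ∀ L : EuclideanSpace ℝ (Fin n) →ₗ[ℝ] EuclideanSpace ℝ (Fin n),
        volume (A + L '' K₀) ≤ volume (B + L '' K₀)) :
    A ⊆ B :=
  sum_comparison_symmetric_linear_images_general n K₀ A B hK₁ hK₂ hK₃ hA₂ hB₁ hB₂ hB₃ hAsymm hBsymm
    h
end

section
/- Let n ≥ 2, let K₀ be a convex body in ℝⁿ, and let A, B be centrally symmetric convex bodies in ℝⁿ. If for every linear map L : ℝⁿ → ℝⁿ and every (n−1)-dimensional linear subspace E of ℝⁿ one has vol_{n-1}(E ∩ (A + L(K₀))) ≤ vol_{n-1}(E ∩ (B + L(K₀))), then A ⊆ B. -/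
/-!
Suppose `a ∈ A \ B`. Separating `a` from the symmetric body `B` gives a functional `f` with
`f a = 1` and `|f| ≤ h < 1` on `B`. Inside a hyperplane `E ∋ a`, write `E = ℝ a ⊕ F` with
`F = ker f ∩ E`, and let `L = t • π` for a linear surjection `π` onto `F`, so that `P = π K₀` has
positive `(n-2)`-volume. Then `E ∩ (A + L K₀)` contains the cylinder `[-a, a] + t P`, of volume
`2 tⁿ⁻² |P|` (up to the fixed factor relating the two coordinate systems), while
`E ∩ (B + L K₀)` lies over `[-h, h]` with fibres inside `W + t P` for a bounded `W ⊆ F`, of volume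
at most `2 h tⁿ⁻² |P + (ρ/t) ball|`. As `t → ∞` the latter fibre volume tends to `|P|`, so the
second section is eventually the smaller one, contradicting the hypothesis.
-/

open MeasureTheory Pointwise Set Metric Filter Topology

namespace LinearMap

variable {K X : Type*} [Field K] [AddCommGroup X] [Module K X]

def prodKerEquiv (f : X →ₗ[K] K) (a : X) (ha : f a = 1) : (K × ker f) ≃ₗ[K] X where
  toFun p := p.1 • a + p.2
  invFun x := (f x, ⟨x - f x • a, by simp [ha]⟩)
  map_add' p q := by simp only [Prod.fst_add, Prod.snd_add, Submodule.coe_add, add_smul]; abel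
  map_smul' c p := by simp [smul_add, smul_smul]
  left_inv p := by
    have hp : f p.2 = 0 := p.2.2
    ext <;> simp [ha, hp]
  right_inv x := by simp

@[simp] lemma prodKerEquiv_apply (f : X →ₗ[K] K) (a : X) (ha : f a = 1) (p : K × ker f) :
    prodKerEquiv f a ha p = p.1 • a + p.2 := rfl

@[simp] lemma prodKerEquiv_symm_apply_fst (f : X →ₗ[K] K) (a : X) (ha : f a = 1) (x : X) :
    ((prodKerEquiv f a ha).symm x).1 = f x := rfl

lemma prodKerEquiv_symm_coe (f : X →ₗ[K] K) (a : X) (ha : f a = 1) (p : ker f) :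
    (prodKerEquiv f a ha).symm p = (0, p) :=
  (prodKerEquiv f a ha).symm_apply_eq.2 (by simp)

end LinearMap

section Cylinder

open LinearMap

variable {X : Type*} [AddCommGroup X] [Module ℝ X] (f : X →ₗ[ℝ] ℝ) (a : X) (ha : f a = 1)

lemma Icc_prod_subset_preimage_prodKerEquiv {A : Set X} (hA : ∀ s ∈ Icc (-1 : ℝ) 1, s • a ∈ A)
    (P : Set (ker f)) :
    Icc (-1) 1 ×ˢ P ⊆ prodKerEquiv f a ha ⁻¹' (A + (↑) '' P) := by
  rintro ⟨s, y⟩ ⟨hs, hy⟩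
  exact add_mem_add (hA s hs) (mem_image_of_mem _ hy)

lemma preimage_prodKerEquiv_subset_Icc_prod {B : Set X} {h : ℝ} (hB : ∀ x ∈ B, |f x| ≤ h)
    (P : Set (ker f)) :
    prodKerEquiv f a ha ⁻¹' (B + (↑) '' P) ⊆
      Icc (-h) h ×ˢ ((fun x ↦ ((prodKerEquiv f a ha).symm x).2) '' B + P) := by
  rintro ⟨s, y⟩ ⟨b, hb, _, ⟨p, hp, rfl⟩, hsum⟩
  have hsy : (s, y) = (prodKerEquiv f a ha).symm b + (0, p) := by
    rw [← prodKerEquiv_symm_coe f a ha, ← map_add, (LinearEquiv.eq_symm_apply _).2 hsum.symm]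
  simp only [Prod.ext_iff, Prod.fst_add, Prod.snd_add, prodKerEquiv_symm_apply_fst,
    add_zero] at hsy
  exact ⟨hsy.1 ▸ abs_le.1 (hB b hb), hsy.2 ▸ add_mem_add (mem_image_of_mem _ hb) hp⟩

end Cylinder

lemma Submodule.preimage_coe_add_image_coe {R V : Type*} [Ring R] [AddCommGroup V] [Module R V]
    (E : Submodule R V) (C : Set V) (S : Set E) :
    ((↑) ⁻¹' (C + (↑) '' S) : Set E) = (↑) ⁻¹' C + S := by
  ext x
  constructor
  · rintro ⟨c, hc, _, ⟨s, hs, rfl⟩, hcs⟩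
    have hcE : c ∈ E := by
      rw [eq_sub_of_add_eq hcs]
      exact E.sub_mem x.2 s.2
    exact ⟨⟨c, hcE⟩, hc, s, hs, Subtype.ext hcs⟩
  · rintro ⟨c, hc, s, hs, rfl⟩
    exact ⟨c, hc, s, mem_image_of_mem _ hs, rfl⟩

lemma exists_submodule_finrank_eq_sub_one_mem {V : Type*} [NormedAddCommGroup V]
    [InnerProductSpace ℝ V] [FiniteDimensional ℝ V] (hV : 2 ≤ Module.finrank ℝ V) (a : V) :
    ∃ E : Submodule ℝ V, Module.finrank ℝ E = Module.finrank ℝ V - 1 ∧ a ∈ E := by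
  have hperp : (ℝ ∙ a)ᗮ ≠ ⊥ := by
    rw [Ne, ← Submodule.finrank_eq_zero]
    have := Submodule.finrank_add_finrank_orthogonal (ℝ ∙ a)
    have : Module.finrank ℝ (ℝ ∙ a) ≤ 1 := by
      simpa using finrank_span_le_card (R := ℝ) ({a} : Set V)
    omega
  obtain ⟨z, hz, hz0⟩ := Submodule.exists_mem_ne_zero_of_ne_bot hperp
  refine ⟨(ℝ ∙ z)ᗮ, ?_, ?_⟩
  · have := Submodule.finrank_add_finrank_orthogonal (ℝ ∙ z)
    rw [finrank_span_singleton hz0] at this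
    omega
  · rw [Submodule.mem_orthogonal_singleton_iff_inner_right, real_inner_comm]
    exact Submodule.mem_orthogonal_singleton_iff_inner_right.1 hz

lemma Convex.smul_mem_of_eq_neg {V : Type*} [AddCommGroup V] [Module ℝ V] {A : Set V}
    (hA : Convex ℝ A) (hsymm : A = -A) {a : V} (ha : a ∈ A) {s : ℝ} (hs : s ∈ Icc (-1 : ℝ) 1) :
    s • a ∈ A := by
  have hna : -a ∈ A := by rw [hsymm]; simpa using ha
  have hcombo : ((1 + s) / 2) • a + ((1 - s) / 2) • -a = s • a := by
    rw [smul_neg, ← sub_eq_add_neg, ← sub_smul]; congr 1; ring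
  exact hcombo ▸ hA ha hna (by linarith [hs.1]) (by linarith [hs.2]) (by ring)

lemma Convex.exists_dual_eq_one_abs_le_of_notMem {V : Type*} [NormedAddCommGroup V]
    [NormedSpace ℝ V] {B : Set V} {a : V} (hB : Convex ℝ B) (hBc : IsClosed B)
    (hBne : B.Nonempty) (hsymm : B = -B) (ha : a ∉ B) :
    ∃ f : StrongDual ℝ V, f a = 1 ∧ ∃ h < 1, ∀ x ∈ B, |f x| ≤ h := by
  obtain ⟨g, u, hgB, hga⟩ := geometric_hahn_banach_closed_point hB hBc ha
  have habs : ∀ x ∈ B, |g x| < u := by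
    intro x hx
    have hnx : -x ∈ B := by rw [hsymm]; simpa using hx
    have := hgB (-x) hnx
    rw [map_neg] at this
    exact abs_lt.2 ⟨by linarith, hgB x hx⟩
  obtain ⟨x₀, hx₀⟩ := hBne
  have hga0 : 0 < g a := ((abs_nonneg _).trans_lt (habs x₀ hx₀)).trans hga
  refine ⟨(g a)⁻¹ • g, by simp [hga0.ne'], u / g a, (div_lt_one hga0).2 hga, fun x hx ↦ ?_⟩
  change |(g a)⁻¹ * g x| ≤ u / g a
  rw [abs_mul, abs_inv, abs_of_pos hga0, inv_mul_eq_div]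
  exact div_le_div_of_nonneg_right (habs x hx).le hga0.le

section Haar

variable {X Y : Type*} [NormedAddCommGroup X] [NormedSpace ℝ X] [FiniteDimensional ℝ X]
  [MeasurableSpace X] [BorelSpace X] [NormedAddCommGroup Y] [NormedSpace ℝ Y]
  [FiniteDimensional ℝ Y] [MeasurableSpace Y] [BorelSpace Y]

lemma LinearEquiv.addHaar_preimage_le_addHaar_preimage (Φ : X ≃ₗ[ℝ] Y) (μ : Measure X)
    [μ.IsAddHaarMeasure] (ν : Measure Y) [ν.IsAddHaarMeasure] {S T : Set Y} (h : ν S ≤ ν T) :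
    μ (Φ ⁻¹' S) ≤ μ (Φ ⁻¹' T) := by
  let L := Φ.toContinuousLinearEquiv
  have hmap : μ.map L = (μ.map L).addHaarScalarFactor ν • ν :=
    Measure.isAddLeftInvariant_eq_smul _ _
  have hpre (U : Set Y) : μ (Φ ⁻¹' U) = μ.map L U :=
    (L.toHomeomorph.toMeasurableEquiv.map_apply U).symm
  rw [hpre, hpre, hmap]
  simp only [Measure.smul_apply]
  gcongr

end Haar

lemma LinearMap.addHaar_image_ne_zero_of_surjective {X Y : Type*} [NormedAddCommGroup X]
    [NormedSpace ℝ X] [NormedAddCommGroup Y] [NormedSpace ℝ Y] [FiniteDimensional ℝ Y]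
    [MeasurableSpace Y] (π : X →ₗ[ℝ] Y) (hπ : Function.Surjective π)
    (ν : Measure Y) [ν.IsAddHaarMeasure] {K : Set X} (hK : (interior K).Nonempty) :
    ν (π '' K) ≠ 0 :=
  (Measure.measure_pos_of_nonempty_interior ν
    ((hK.image π).mono ((π.isOpenMap_of_finiteDimensional hπ).image_interior_subset K))).ne'

section Thickening

variable {F : Type*} [NormedAddCommGroup F] [NormedSpace ℝ F] [FiniteDimensional ℝ F]
  [MeasurableSpace F] [BorelSpace F] (μ : Measure F) [μ.IsAddHaarMeasure]

lemma measure_add_smul_le_cthickening {W P : Set F} {ρ t : ℝ} (hP : IsCompact P)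
    (hW : W ⊆ closedBall 0 ρ) (hρ : 0 ≤ ρ) (ht : 0 < t) :
    μ (W + t • P) ≤ ENNReal.ofReal (t ^ Module.finrank ℝ F) * μ (cthickening (ρ / t) P) := by
  have hsub : W + t • P ⊆ t • cthickening (ρ / t) P := by
    rw [← hP.add_closedBall_zero (div_nonneg hρ ht.le), smul_add,
      smul_closedBall _ _ (div_nonneg hρ ht.le), smul_zero, Real.norm_of_nonneg ht.le,
      mul_div_cancel₀ _ ht.ne', add_comm]
    exact add_subset_add_left hW
  exact (measure_mono hsub).trans (Measure.addHaar_smul_of_nonneg μ ht.le _).le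

lemma eventually_ofReal_mul_measure_cthickening_lt {P : Set F} (hP : IsCompact P)
    (hP0 : μ P ≠ 0) {h : ℝ} (hh : h < 1) :
    ∀ᶠ r in 𝓝 0, ENNReal.ofReal h * μ (cthickening r P) < μ P := by
  have hlim := ENNReal.Tendsto.const_mul (tendsto_measure_cthickening_of_isCompact (μ := μ) hP)
    (a := ENNReal.ofReal h) (Or.inr ENNReal.ofReal_ne_top)
  refine hlim.eventually_lt_const ?_
  simpa using ENNReal.mul_lt_mul_left hP0 hP.measure_lt_top.ne (ENNReal.ofReal_lt_one.2 hh)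

lemma exists_measure_Icc_prod_add_smul_lt {W P : Set F} (hW : Bornology.IsBounded W)
    (hP : IsCompact P) (hP0 : μ P ≠ 0) {h : ℝ} (hh : h < 1) :
    ∃ t > (0 : ℝ), (volume.prod μ) (Icc (-h) h ×ˢ (W + t • P)) <
      (volume.prod μ) (Icc (-1 : ℝ) 1 ×ˢ (t • P)) := by
  obtain ⟨ρ, hρ, hWρ⟩ := hW.subset_closedBall_lt 0 0
  have hρt : Tendsto (fun t : ℝ ↦ ρ / t) atTop (𝓝 0) := tendsto_const_nhds.div_atTop tendsto_id
  obtain ⟨t, hlt, ht⟩ := ((hρt.eventually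
    (eventually_ofReal_mul_measure_cthickening_lt μ hP hP0 hh)).and
    (eventually_gt_atTop 0)).exists
  refine ⟨t, ht, ?_⟩
  set d := Module.finrank ℝ F
  set c := ENNReal.ofReal 2 * ENNReal.ofReal (t ^ d)
  have hc0 : c ≠ 0 := mul_ne_zero (by simp) (by simp [pow_pos ht])
  have hctop : c ≠ ⊤ := ENNReal.mul_ne_top ENNReal.ofReal_ne_top ENNReal.ofReal_ne_top
  rw [Measure.prod_prod, Measure.prod_prod, Real.volume_Icc, Real.volume_Icc,
    Measure.addHaar_smul_of_nonneg μ ht.le]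
  calc ENNReal.ofReal (h - -h) * μ (W + t • P)
      ≤ ENNReal.ofReal (2 * h) * (ENNReal.ofReal (t ^ d) * μ (cthickening (ρ / t) P)) := by
        rw [sub_neg_eq_add, ← two_mul]
        gcongr
        exact measure_add_smul_le_cthickening μ hP hWρ hρ.le ht
    _ = c * (ENNReal.ofReal h * μ (cthickening (ρ / t) P)) := by
        rw [ENNReal.ofReal_mul zero_le_two]; ring
    _ < c * μ P := ENNReal.mul_lt_mul_right hc0 hctop hlt
    _ = ENNReal.ofReal (1 - -1) * (ENNReal.ofReal (t ^ d) * μ P) := by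
        norm_num [c]; ring

end Thickening

theorem subset_of_section_sums_symmetric_linear_images_general (n : ℕ) (hn : 2 ≤ n)
    (K₀ A B : Set (EuclideanSpace ℝ (Fin n)))
    (hK₁ : IsCompact K₀) (hK₃ : (interior K₀).Nonempty)
    (hA₂ : Convex ℝ A)
    (hB₁ : IsCompact B) (hB₂ : Convex ℝ B) (hB₃ : (interior B).Nonempty)
    (hAsymm : A = -A) (hBsymm : B = -B)
    (h : ∀ L : EuclideanSpace ℝ (Fin n) →ₗ[ℝ] EuclideanSpace ℝ (Fin n),
        ∀ E : Submodule ℝ (EuclideanSpace ℝ (Fin n)), Module.finrank ℝ E = n - 1 →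
        volume ((↑) ⁻¹' (A + L '' K₀) : Set E) ≤
          volume ((↑) ⁻¹' (B + L '' K₀) : Set E)) :
    A ⊆ B := by
  intro a ha
  by_contra haB
  obtain ⟨f, hfa, h₀, hh₀, hfB⟩ :=
    hB₂.exists_dual_eq_one_abs_le_of_notMem hB₁.isClosed (hB₃.mono interior_subset) hBsymm haB
  obtain ⟨E, hE, haE⟩ := exists_submodule_finrank_eq_sub_one_mem (by simpa using hn) a
  rw [finrank_euclideanSpace_fin] at hE
  set fE : E →ₗ[ℝ] ℝ := (f : EuclideanSpace ℝ (Fin n) →ₗ[ℝ] ℝ) ∘ₗ E.subtype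
  set Φ := LinearMap.prodKerEquiv fE ⟨a, haE⟩ hfa
  set π : EuclideanSpace ℝ (Fin n) →ₗ[ℝ] LinearMap.ker fE :=
    LinearMap.snd ℝ ℝ _ ∘ₗ Φ.symm.toLinearMap ∘ₗ E.orthogonalProjectionOnto.toLinearMap
  have hπ : Function.Surjective π := Prod.snd_surjective.comp (Φ.symm.surjective.comp
    fun v ↦ ⟨v, E.orthogonalProjectionOnto_mem_subspace_eq_self v⟩)
  have hW : Bornology.IsBounded ((fun x ↦ (Φ.symm x).2) '' ((↑) ⁻¹' B : Set E)) :=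
    ((E.closed_of_finiteDimensional.isClosedEmbedding_subtypeVal.isCompact_preimage hB₁).image
      (LinearMap.snd ℝ ℝ _ ∘ₗ Φ.symm.toLinearMap).continuous_of_finiteDimensional).isBounded
  set μ : Measure (LinearMap.ker fE) := Measure.addHaar
  obtain ⟨t, ht, hlt⟩ := exists_measure_Icc_prod_add_smul_lt μ hW
    (hK₁.image π.continuous_of_finiteDimensional) (π.addHaar_image_ne_zero_of_surjective hπ μ hK₃)
    hh₀
  have himage : (E.subtype ∘ₗ (LinearMap.ker fE).subtype ∘ₗ (t • π)) '' K₀ =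
      (↑) '' ((↑) '' (t • π '' K₀) : Set E) := by
    simp only [LinearMap.coe_comp, LinearMap.coe_smul, ← image_smul, image_image]
    rfl
  have hsec := h (E.subtype ∘ₗ (LinearMap.ker fE).subtype ∘ₗ (t • π)) E hE
  rw [himage, Submodule.preimage_coe_add_image_coe, Submodule.preimage_coe_add_image_coe] at hsec
  have hle := Φ.addHaar_preimage_le_addHaar_preimage (volume.prod μ) volume hsec
  refine hlt.not_ge ((measure_mono ?_).trans (hle.trans (measure_mono ?_)))
  · exact Icc_prod_subset_preimage_prodKerEquiv fE _ hfa
      (fun s ↦ hA₂.smul_mem_of_eq_neg hAsymm ha) _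
  · exact preimage_prodKerEquiv_subset_Icc_prod fE _ hfa (fun x ↦ hfB x) _

/-- **Corollary (symmetric bodies: sections of sums with linear images of a
fixed body).** If `A`, `B` are centrally symmetric convex bodies in `ℝⁿ`,
`n ≥ 2`, `K₀` a convex body, and for every linear map `L : ℝⁿ → ℝⁿ` and every
`(n-1)`-dimensional subspace `E`, the `(n-1)`-volume of `E ∩ (A + L(K₀))` is
at most that of `E ∩ (B + L(K₀))`, then `A ⊆ B`. -/
theorem subset_of_section_sums_symmetric_linear_images (n : ℕ) (hn : 2 ≤ n)
    (K₀ A B : Set (EuclideanSpace ℝ (Fin n)))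
    (hK₁ : IsCompact K₀) (hK₂ : Convex ℝ K₀) (hK₃ : (interior K₀).Nonempty)
    (hA₁ : IsCompact A) (hA₂ : Convex ℝ A) (hA₃ : (interior A).Nonempty)
    (hB₁ : IsCompact B) (hB₂ : Convex ℝ B) (hB₃ : (interior B).Nonempty)
    (hAsymm : A = -A) (hBsymm : B = -B)
    (h : ∀ L : EuclideanSpace ℝ (Fin n) →ₗ[ℝ] EuclideanSpace ℝ (Fin n),
        ∀ E : Submodule ℝ (EuclideanSpace ℝ (Fin n)), Module.finrank ℝ E = n - 1 →
        volume ((↑) ⁻¹' (A + L '' K₀) : Set E) ≤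
          volume ((↑) ⁻¹' (B + L '' K₀) : Set E)) :
    A ⊆ B :=
  subset_of_section_sums_symmetric_linear_images_general n hn K₀ A B hK₁ hK₃ hA₂ hB₁ hB₂ hB₃ hAsymm
    hBsymm h
end

section
/- Let n ≥ 2 and let A, B be convex bodies in ℝⁿ. Suppose that for every convex body K in ℝⁿ and every (n−1)-dimensional linear subspace E of ℝⁿ one has vol_{n-1}(E ∩ (A + K)) ≤ vol_{n-1}(E ∩ (B + K)). Then A − A ⊆ B − B; in particular, there exist x_A, x_B ∈ ℝⁿ such that A + x_A ⊆ B − B and B − B ⊆ (n+1)·(B + x_B). -/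
/-!
Test the hypothesis on the hyperplane `E = ker f` and a small ball `K` centred at `-a`: if a point
`a ∈ A` lay strictly beyond `B` in the direction `f`, then `E` would meet the interior of `A + K`
but miss `B + K`. So `A` lies in every closed half-space containing `B`, whence `A ⊆ B` and
`A - A ⊆ B - B`. For `B - B ⊆ (n + 1) • (B + x)`, apply Helly's theorem to the compact convex
sets `(b₁ - b₂) / (n + 1) - B`: any `n + 1` of them share a point, built from an average of points
of `B`.
-/

open MeasureTheory Pointwise Metric Set Finset Module

section Geometry

variable {V : Type*} [NormedAddCommGroup V] [NormedSpace ℝ V]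

lemma exists_pos_add_closedBall_neg_subset {B : Set V} (hB : IsCompact B) {f : StrongDual ℝ V}
    {a : V} (hlt : ∀ b ∈ B, f b < f a) :
    ∃ ρ > 0, B + closedBall (-a) ρ ⊆ {x | f x < 0} := by
  obtain ⟨δ, hδ, hsub⟩ :=
    hB.exists_thickening_subset_open (isOpen_lt f.continuous continuous_const) hlt
  refine ⟨δ / 2, half_pos hδ, ?_⟩
  rintro _ ⟨b, hb, k, hk, rfl⟩
  have hbk : b + (k + a) ∈ thickening δ B := by
    refine mem_thickening_iff.2 ⟨b, hb, ?_⟩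
    rw [dist_eq_norm, add_sub_cancel_left, ← sub_neg_eq_add, ← dist_eq_norm]
    exact (mem_closedBall.1 hk).trans_lt (half_lt_self hδ)
  have hneg := hsub hbk
  simp only [mem_ofPred_eq, map_add] at hneg ⊢
  linarith

lemma zero_mem_interior_add_closedBall_neg {A : Set V} {a : V} (ha : a ∈ A) {ρ : ℝ}
    (hρ : 0 < ρ) : (0 : V) ∈ interior (A + closedBall (-a) ρ) := by
  refine subset_interior_add_right ⟨a, ha, -a, ?_, add_neg_cancel a⟩
  rw [interior_closedBall _ hρ.ne']
  exact mem_ball_self hρ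

end Geometry

section Sections

variable {V : Type*} [NormedAddCommGroup V] [InnerProductSpace ℝ V] [FiniteDimensional ℝ V]
  [MeasurableSpace V] [BorelSpace V]

lemma volume_preimage_coe_pos {E : Submodule ℝ V} {S : Set V} {x : V} (hxE : x ∈ E)
    (hxS : x ∈ interior S) : 0 < volume ((↑) ⁻¹' S : Set E) :=
  calc 0 < volume ((↑) ⁻¹' interior S : Set E) :=
        (isOpen_interior.preimage continuous_subtype_val).measure_pos _ ⟨⟨x, hxE⟩, hxS⟩
    _ ≤ volume ((↑) ⁻¹' S : Set E) := measure_mono (preimage_mono interior_subset)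

theorem subset_of_volume_section_add_le {A B : Set V} (hBc : IsCompact B) (hB : Convex ℝ B)
    (hBne : B.Nonempty)
    (h : ∀ K : Set V, IsCompact K → Convex ℝ K → (interior K).Nonempty →
      ∀ E : Submodule ℝ V, finrank ℝ E + 1 = finrank ℝ V →
        volume ((↑) ⁻¹' (A + K) : Set E) ≤ volume ((↑) ⁻¹' (B + K) : Set E)) :
    A ⊆ B := by
  rw [← iInter_halfSpaces_eq hB hBc.isClosed]
  intro a ha
  simp only [mem_iInter, mem_ofPred_eq]
  intro f
  by_contra! hlt
  have hf : (f : V →ₗ[ℝ] ℝ) ≠ 0 := fun hf0 => by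
    obtain ⟨b, hb⟩ := hBne
    have hf0' : ∀ x, f x = 0 := LinearMap.congr_fun hf0
    simpa [hf0'] using hlt b hb
  obtain ⟨ρ, hρ, hsub⟩ := exists_pos_add_closedBall_neg_subset hBc hlt
  have hle := h (closedBall (-a) ρ) (isCompact_closedBall _ _) (convex_closedBall _ _)
    ((nonempty_ball.2 hρ).mono (by rw [interior_closedBall _ hρ.ne'])) _
    (Dual.finrank_ker_add_one_of_ne_zero hf)
  have hB0 : ((↑) ⁻¹' (B + closedBall (-a) ρ) : Set (LinearMap.ker (f : V →ₗ[ℝ] ℝ))) = ∅ :=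
    eq_empty_of_forall_notMem fun x hx => (hsub hx).ne x.2
  rw [hB0, measure_empty] at hle
  exact (volume_preimage_coe_pos (Submodule.zero_mem _)
    (zero_mem_interior_add_closedBall_neg ha hρ)).ne' (le_antisymm hle bot_le)

end Sections

section Helly

variable {V : Type*} [AddCommGroup V] [Module ℝ V] {B : Set V}

lemma Convex.inv_smul_sum_add_smul_mem (hB : Convex ℝ B) {ι : Type*} {I : Finset ι} {z : ι → V}
    (hz : ∀ i ∈ I, z i ∈ B) {b₀ : V} (hb₀ : b₀ ∈ B) {N : ℝ} (hN : 0 < N) (hIN : #I ≤ N) :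
    N⁻¹ • (∑ i ∈ I, z i + (N - #I) • b₀) ∈ B := by
  have := hB.sum_mem (t := I.insertNone) (w := fun o => o.elim ((N - #I) / N) fun _ => N⁻¹)
    (z := fun o => o.elim b₀ z) ?_ ?_ ?_
  · simpa [sum_insertNone, smul_add, Finset.smul_sum, smul_smul, div_eq_inv_mul, add_comm]
      using this
  · rintro (_ | i) _
    · exact div_nonneg (sub_nonneg.2 hIN) hN.le
    · exact inv_nonneg.2 hN.le
  · simp only [sum_insertNone, Option.elim, sum_const, nsmul_eq_mul]
    field_simp
    ring
  · rintro (_ | i) hi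
    · exact hb₀
    · exact hz i (some_mem_insertNone.1 hi)

lemma Convex.exists_forall_inv_smul_sub_sub_mem (hB : Convex ℝ B) {b₀ : V} (hb₀ : b₀ ∈ B)
    {ι : Type*} {I : Finset ι} {x y : ι → V} (hx : ∀ i ∈ I, x i ∈ B) (hy : ∀ i ∈ I, y i ∈ B)
    {N : ℝ} (hN : 0 < N) (hIN : #I ≤ N) :
    ∃ c, ∀ i ∈ I, N⁻¹ • (x i - y i) - c ∈ B := by
  classical
  refine ⟨-(N⁻¹ • (∑ j ∈ I, y j + (N - #I) • b₀)), fun i hi => ?_⟩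
  -- replacing `y i` by `x i` in the sum turns the left side into an average of points of `B`
  have hsum : ∑ j ∈ I, Function.update y i (x i) j = x i - y i + ∑ j ∈ I, y j := by
    rw [sum_update_of_mem hi, sum_eq_add_sum_sdiff_singleton_of_mem hi y]
    abel
  have hmem := hB.inv_smul_sum_add_smul_mem (z := Function.update y i (x i)) (fun j hj => ?_)
    hb₀ hN hIN
  · rw [hsum] at hmem
    convert hmem using 1
    module
  · rcases eq_or_ne j i with rfl | hji
    · simpa using hx j hj
    · simpa [hji] using hy j hj

variable [TopologicalSpace V] [IsTopologicalAddGroup V] [T2Space V]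
  [FiniteDimensional ℝ V]

theorem Convex.exists_sub_subset_smul_image_add (hB : Convex ℝ B) (hBc : IsCompact B)
    (hBne : B.Nonempty) :
    ∃ c, B - B ⊆ ((finrank ℝ V : ℝ) + 1) • ((fun b => b + c) '' B) := by
  obtain ⟨b₀, hb₀⟩ := hBne
  set N : ℝ := finrank ℝ V + 1 with hN_def
  have hN : 0 < N := by positivity
  -- `c ∈ F (b₁, b₂)` says exactly that `N • (β + c) = b₁ - b₂` for some `β ∈ B`
  let F : B × B → Set V := fun p => {N⁻¹ • ((p.1 : V) - p.2)} - B
  have hconvex (p : B × B) : Convex ℝ (F p) := (convex_singleton _).sub hB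
  have hcompact (p : B × B) : IsCompact (F p) := by
    simp only [F, sub_eq_add_neg]
    exact isCompact_singleton.add hBc.neg
  have hinter (I : Finset (B × B)) (hI : #I ≤ finrank ℝ V + 1) : (⋂ p ∈ I, F p).Nonempty := by
    obtain ⟨c, hc⟩ := hB.exists_forall_inv_smul_sub_sub_mem hb₀ (I := I) (x := fun p => p.1)
      (y := fun p => p.2) (fun p _ => p.1.2) (fun p _ => p.2.2) hN
      (by rw [hN_def]; exact_mod_cast hI)
    exact ⟨c, mem_iInter₂.2 fun p hp => ⟨_, rfl, _, hc p hp, sub_sub_cancel _ _⟩⟩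
  obtain ⟨c, hc⟩ := Convex.helly_theorem_compact' hconvex hcompact hinter
  refine ⟨c, ?_⟩
  rintro _ ⟨b₁, hb₁, b₂, hb₂, rfl⟩
  obtain ⟨_, rfl, β, hβ, rfl⟩ := mem_iInter.1 hc (⟨b₁, hb₁⟩, ⟨b₂, hb₂⟩)
  refine ⟨_, ⟨β, hβ, rfl⟩, ?_⟩
  change N • (β + (N⁻¹ • (b₁ - b₂) - β)) = b₁ - b₂
  rw [add_sub_cancel, smul_inv_smul₀ hN.ne']

end Helly

theorem diff_subset_of_section_sums_general (n : ℕ)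
    (A B : Set (EuclideanSpace ℝ (Fin n)))
    (hB₁ : IsCompact B) (hB₂ : Convex ℝ B) (hB₃ : (interior B).Nonempty)
    (h : ∀ K : Set (EuclideanSpace ℝ (Fin n)),
        IsCompact K → Convex ℝ K → (interior K).Nonempty →
        ∀ E : Submodule ℝ (EuclideanSpace ℝ (Fin n)), Module.finrank ℝ E = n - 1 →
        volume ((↑) ⁻¹' (A + K) : Set E) ≤ volume ((↑) ⁻¹' (B + K) : Set E)) :
    A - A ⊆ B - B ∧
      ∃ x_A x_B : EuclideanSpace ℝ (Fin n),
        (fun a => a + x_A) '' A ⊆ B - B ∧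
        B - B ⊆ ((n : ℝ) + 1) • ((fun b => b + x_B) '' B) := by
  obtain ⟨b₀, hb₀⟩ := hB₃.mono interior_subset
  have hAB : A ⊆ B := subset_of_volume_section_add_le hB₁ hB₂ ⟨b₀, hb₀⟩
    fun K hK₁ hK₂ hK₃ E hE => h K hK₁ hK₂ hK₃ E (by rw [finrank_euclideanSpace_fin] at hE; omega)
  obtain ⟨x_B, hx_B⟩ := hB₂.exists_sub_subset_smul_image_add hB₁ ⟨b₀, hb₀⟩
  rw [finrank_euclideanSpace_fin] at hx_B
  refine ⟨sub_subset_sub hAB hAB, -b₀, x_B, ?_, hx_B⟩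
  rintro _ ⟨a, ha, rfl⟩
  exact ⟨a, hAB ha, b₀, hb₀, sub_eq_add_neg a b₀⟩

/-- **Theorem (non-symmetric bodies: hyperplane sections of Minkowski sums).**
If `A`, `B` are convex bodies in `ℝⁿ`, `n ≥ 2`, and for every convex body `K`
and every `(n-1)`-dimensional subspace `E` one has
`vol_{n-1}(E ∩ (A + K)) ≤ vol_{n-1}(E ∩ (B + K))`, then `A - A ⊆ B - B`;
in particular there are `x_A, x_B` with `A + x_A ⊆ B - B ⊆ (n+1)(B + x_B)`. -/
theorem diff_subset_of_section_sums (n : ℕ) (hn : 2 ≤ n)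
    (A B : Set (EuclideanSpace ℝ (Fin n)))
    (hA₁ : IsCompact A) (hA₂ : Convex ℝ A) (hA₃ : (interior A).Nonempty)
    (hB₁ : IsCompact B) (hB₂ : Convex ℝ B) (hB₃ : (interior B).Nonempty)
    (h : ∀ K : Set (EuclideanSpace ℝ (Fin n)),
        IsCompact K → Convex ℝ K → (interior K).Nonempty →
        ∀ E : Submodule ℝ (EuclideanSpace ℝ (Fin n)), Module.finrank ℝ E = n - 1 →
        volume ((↑) ⁻¹' (A + K) : Set E) ≤ volume ((↑) ⁻¹' (B + K) : Set E)) :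
    A - A ⊆ B - B ∧
      ∃ x_A x_B : EuclideanSpace ℝ (Fin n),
        (fun a => a + x_A) '' A ⊆ B - B ∧
        B - B ⊆ ((n : ℝ) + 1) • ((fun b => b + x_B) '' B) :=
  diff_subset_of_section_sums_general n A B hB₁ hB₂ hB₃ h
end
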